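/- (Example 3.7, Step 1.) On Z = [0, ∞) ⊆ ℝ define G(x,y,z) = exp(|x − y| + |y − z| + |z − x|), and define F : Z → Z by F x = x/2 if 0 ≤ x < 1/2 and F x = x − 1/4 if x ≥ 1/2. Then for all x, y, z ∈ [0, 1/2) one has G(Fx, Fy, Fz) ≤ M^{5/8}, where M = max{ G(x,y,z), G(x,Fx,Fx), G(y,Fy,Fy), G(x,Fy,Fy), min{G(z,Fx,Fx), G(x,z,z)} }; and moreover G(1/3, F(1/3), F(1/3)) = e^{1/3} ≤ 33/16. -/

import Mathlib

noncomputable def Gexp : ℝ → ℝ → ℝ → ℝ :=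
  fun x y z => Real.exp (|x - y| + |y - z| + |z - x|)

noncomputable def F37 : ℝ → ℝ :=
  fun x => if x < 1 / 2 then x / 2 else x - 1 / 4

/-!
On `[0, 1/2)` the map `F37` is `x ↦ x / 2`, and scaling all arguments by `c ≥ 0` raises `Gexp`
to the power `c`. Hence `Gexp (F x) (F y) (F z) = Gexp x y z ^ (1/2) ≤ Gexp x y z ^ (5/8)`, as
`Gexp ≥ 1`, and `Gexp x y z` is the first entry of the maximum. The numerical bound
`exp (1/3) ≤ 33/16` follows by cubing: `e < 2.72 < (33/16)^3`.
-/

lemma one_le_Gexp (x y z : ℝ) : 1 ≤ Gexp x y z :=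
  Real.one_le_exp (by positivity)

lemma Gexp_mul_left {c : ℝ} (hc : 0 ≤ c) (x y z : ℝ) :
    Gexp (c * x) (c * y) (c * z) = Gexp x y z ^ c := by
  simp only [Gexp, ← Real.exp_mul, ← mul_sub, abs_mul, abs_of_nonneg hc]
  ring_nf

lemma F37_of_lt_half {x : ℝ} (hx : x < 1 / 2) : F37 x = 2⁻¹ * x := by
  rw [F37, if_pos hx, div_eq_inv_mul]

lemma Gexp_F37_of_lt_half {x y z : ℝ} (hx : x < 1 / 2) (hy : y < 1 / 2) (hz : z < 1 / 2) :
    Gexp (F37 x) (F37 y) (F37 z) ≤ Gexp x y z ^ ((5 : ℝ) / 8) := by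
  rw [F37_of_lt_half hx, F37_of_lt_half hy, F37_of_lt_half hz, Gexp_mul_left (by norm_num)]
  exact Real.rpow_le_rpow_of_exponent_le (one_le_Gexp x y z) (by norm_num)

lemma Gexp_one_third_F37 : Gexp (1 / 3) (F37 (1 / 3)) (F37 (1 / 3)) = Real.exp (1 / 3) := by
  rw [F37_of_lt_half (by norm_num), Gexp]
  norm_num [abs_of_nonneg, abs_of_nonpos]

lemma exp_one_third_le : Real.exp (1 / 3) ≤ 33 / 16 := by
  have hcube : Real.exp (1 / 3) ^ 3 = Real.exp 1 := by
    rw [← Real.exp_nat_mul]; norm_num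
  refine le_of_pow_le_pow_left₀ three_ne_zero (by norm_num) ?_
  rw [hcube]
  linarith [Real.exp_one_lt_d9]

theorem example_3_7_step1 :
    (∀ x y z : ℝ, 0 ≤ x → x < 1 / 2 → 0 ≤ y → y < 1 / 2 → 0 ≤ z → z < 1 / 2 →
      Gexp (F37 x) (F37 y) (F37 z) ≤
        (max (Gexp x y z)
          (max (Gexp x (F37 x) (F37 x))
            (max (Gexp y (F37 y) (F37 y))
              (max (Gexp x (F37 y) (F37 y))
                (min (Gexp z (F37 x) (F37 x)) (Gexp x z z)))))) ^ ((5 : ℝ) / 8)) ∧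
    Gexp (1 / 3) (F37 (1 / 3)) (F37 (1 / 3)) = Real.exp (1 / 3) ∧
    Real.exp (1 / 3) ≤ 33 / 16 := by
  refine ⟨fun x y z _ hx _ hy _ hz => ?_, Gexp_one_third_F37, exp_one_third_le⟩
  calc Gexp (F37 x) (F37 y) (F37 z) ≤ Gexp x y z ^ ((5 : ℝ) / 8) :=
        Gexp_F37_of_lt_half hx hy hz
    _ ≤ _ := Real.rpow_le_rpow (by linarith [one_le_Gexp x y z]) (le_max_left _ _) (by norm_num)
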